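/- Let ρ0 be a density matrix on a Hilbert space of finite dimension n, let H be a Hermitian Hamiltonian, ħ > 0, and let ρ(t) = exp(−iHt/ħ) ρ0 exp(iHt/ħ). Then for every t ≥ 0 the Bures distance from the initial state grows at most linearly with rate ΔE_{ρ0}/ħ: √(2 − 2F(ρ0, ρ(t))) ≤ t·ΔE_{ρ0}/ħ, where ΔE_{ρ0} = √(tr(H²ρ0) − tr(Hρ0)²). (This is the Mandelstam–Tamm quantum speed limit: the state cannot leave the ε-Bures-ball around ρ0 before time ε·ħ/ΔE_{ρ0}.) -/

import Mathlib

/-!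
Write `U = exp(-iHt/ℏ)`, so that `ρ(t) = U ρ₀ U*`. Then `√ρ₀ ρ(t) √ρ₀ = M M*` with
`M = √ρ₀ U √ρ₀`, and `tr √(M M*) ≥ Re tr M = Re tr (U ρ₀)`, so `F(ρ₀, ρ(t)) ≥ Re tr (U ρ₀)`.
Subtracting the mean energy `E = tr (H ρ₀)` from `H` multiplies `U` by a phase that cancels in
`ρ(t)`. In an eigenbasis of `H - E` with eigenvalues `λⱼ`, the diagonal of `ρ₀` is a probability
vector `p`, and `Re tr (U ρ₀) = ∑ pⱼ cos (t λⱼ / ℏ) ≥ 1 - (t / ℏ)² / 2 · ∑ pⱼ λⱼ²`, where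
`∑ pⱼ λⱼ² = tr ((H - E)² ρ₀) = ΔE²`. Hence `2 - 2 F ≤ (t ΔE / ℏ)²`.
-/

open Matrix MeasureTheory Real
open scoped Classical ComplexOrder
open scoped MatrixOrder

/-- The positive semidefinite square root of a matrix (junk value `0` if the matrix is not
positive semidefinite). -/
noncomputable def matSqrt {n : ℕ} (A : Matrix (Fin n) (Fin n) ℂ) : Matrix (Fin n) (Fin n) ℂ :=
  if h : A.PosSemidef then CFC.sqrt A else 0

/-- The unitary time evolution `exp(-iHt/h) A exp(iHt/h)`. -/
noncomputable def evol {n : ℕ} (ℏ : ℝ) (H A : Matrix (Fin n) (Fin n) ℂ) (t : ℝ) :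
    Matrix (Fin n) (Fin n) ℂ :=
  NormedSpace.exp ((-(Complex.I * t / ℏ)) • H) * A * NormedSpace.exp ((Complex.I * t / ℏ) • H)

/-- The fidelity `F(ρ,σ) = tr √(√ρ σ √ρ)` of two density matrices. -/
noncomputable def fidelity {n : ℕ} (ρ σ : Matrix (Fin n) (Fin n) ℂ) : ℝ :=
  ((matSqrt (matSqrt ρ * σ * matSqrt ρ)).trace).re

namespace Matrix

variable {n : Type*} [Fintype n]

theorem sq_norm_diag_le_re_mul_conjTranspose_diag {𝕜 : Type*} [RCLike 𝕜] (N : Matrix n n 𝕜)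
    (i : n) : ‖N i i‖ ^ 2 ≤ RCLike.re ((N * Nᴴ) i i) := by
  have hdiag : RCLike.re ((N * Nᴴ) i i) = ∑ k, ‖N i k‖ ^ 2 := by
    simp [mul_apply, RCLike.mul_conj]
  rw [hdiag]
  exact Finset.single_le_sum (fun k _ => sq_nonneg ‖N i k‖) (Finset.mem_univ i)

variable [DecidableEq n]

theorem trace_mul_diagonal_mul_mul {R : Type*} [CommSemiring R] (U W ρ : Matrix n n R)
    (d : n → R) : (U * diagonal d * W * ρ).trace = ∑ j, d j * (W * ρ * U) j j := by
  rw [mul_assoc, mul_assoc, trace_mul_comm, mul_assoc, mul_assoc]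
  simp [trace, diagonal_mul]

theorem re_trace_mul_diagonal_mul_star_mul (U : Matrix n n ℂ) {ρ : Matrix n n ℂ}
    (hρ : ρ.IsHermitian) (d : n → ℂ) :
    (U * diagonal d * star U * ρ).trace.re = ∑ j, (d j).re * ((star U * ρ * U) j j).re := by
  have hρ' : (star U * ρ * U).IsHermitian := by
    simpa [star_eq_conjTranspose] using isHermitian_conjTranspose_mul_mul U hρ
  rw [trace_mul_diagonal_mul_mul, Complex.re_sum]
  refine Finset.sum_congr rfl fun j _ => ?_
  have him : ((star U * ρ * U) j j).im = 0 := by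
    rw [← hρ'.coe_re_apply_self j]
    simp
  simp [Complex.mul_re, him]

theorem re_trace_sub_smul_one_mul_self_mul (H ρ : Matrix n n ℂ) (x : ℝ) :
    ((H - (x : ℂ) • 1) * (H - (x : ℂ) • 1) * ρ).trace.re =
      (H * H * ρ).trace.re - 2 * x * (H * ρ).trace.re + x ^ 2 * ρ.trace.re := by
  have hexpand : (H - (x : ℂ) • 1) * (H - (x : ℂ) • 1) * ρ =
      H * H * ρ - ((2 * x : ℝ) : ℂ) • (H * ρ) + ((x ^ 2 : ℝ) : ℂ) • ρ := by
    simp only [sub_mul, mul_sub, smul_mul_assoc, mul_smul_comm, one_mul, mul_one, smul_sub,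
      smul_smul]
    push_cast
    rw [sq, two_mul, add_smul]
    abel
  rw [hexpand, trace_add, trace_sub, trace_smul, trace_smul, Complex.add_re, Complex.sub_re,
    smul_eq_mul, smul_eq_mul, Complex.re_ofReal_mul, Complex.re_ofReal_mul]

theorem exp_smul_sub_smul_one (H : Matrix n n ℂ) (c z : ℂ) :
    NormedSpace.exp (c • (H - z • 1)) = Complex.exp (-(c * z)) • NormedSpace.exp (c • H) := by
  have hsplit : c • (H - z • 1) = c • H + algebraMap ℂ (Matrix n n ℂ) (-(c * z)) := by
    rw [Algebra.algebraMap_eq_smul_one, smul_sub, smul_smul, neg_smul, sub_eq_add_neg]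
  have hscalar : NormedSpace.exp (algebraMap ℂ (Matrix n n ℂ) (-(c * z))) =
      algebraMap ℂ (Matrix n n ℂ) (NormedSpace.exp (-(c * z))) := by
    -- `exp` only depends on the topology, which every matrix norm induces
    open scoped Norms.Operator in exact (NormedSpace.algebraMap_exp_comm _).symm
  rw [hsplit, exp_add_of_commute _ _ (Algebra.commute_algebraMap_right _ _), hscalar,
    ← Complex.exp_eq_exp_ℂ, Algebra.algebraMap_eq_smul_one, mul_smul_comm, mul_one]

theorem IsHermitian.exp_smul_eq_conj_diagonal {G : Matrix n n ℂ} (hG : G.IsHermitian) (c : ℂ) :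
    NormedSpace.exp (c • G) = (hG.eigenvectorUnitary : Matrix n n ℂ) *
      diagonal (fun j => Complex.exp (c * hG.eigenvalues j)) *
      star (hG.eigenvectorUnitary : Matrix n n ℂ) := by
  have hconj := Matrix.exp_units_conj (Unitary.toUnits hG.eigenvectorUnitary)
    (c • diagonal (RCLike.ofReal ∘ hG.eigenvalues))
  simp only [Unitary.val_toUnits_apply, Unitary.val_inv_toUnits_apply, UnitaryGroup.inv_val,
    mul_smul_comm, smul_mul_assoc] at hconj
  conv_lhs => rw [hG.spectral_theorem, Unitary.conjStarAlgAut_apply, hconj]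
  rw [← diagonal_smul, exp_diagonal]
  congr 2
  funext j
  simp [Pi.exp_def, ← Complex.exp_eq_exp_ℂ]

theorem IsHermitian.mul_self_eq_conj_diagonal {G : Matrix n n ℂ} (hG : G.IsHermitian) :
    G * G = (hG.eigenvectorUnitary : Matrix n n ℂ) *
      diagonal (fun j => (hG.eigenvalues j : ℂ) ^ 2) *
      star (hG.eigenvectorUnitary : Matrix n n ℂ) := by
  conv_lhs => rw [hG.spectral_theorem]
  simp only [Unitary.conjStarAlgAut_apply, mul_assoc]
  simp [← mul_assoc, sq]

theorem IsHermitian.one_sub_sq_div_two_mul_re_trace_le_re_trace_exp_mul {G : Matrix n n ℂ}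
    (hG : G.IsHermitian) {ρ : Matrix n n ℂ} (hρ : ρ.PosSemidef) (htr : ρ.trace = 1) (θ : ℝ) :
    1 - θ ^ 2 / 2 * (G * G * ρ).trace.re ≤
      (NormedSpace.exp ((θ * Complex.I) • G) * ρ).trace.re := by
  set U : Matrix n n ℂ := (hG.eigenvectorUnitary : Matrix n n ℂ)
  set p : n → ℝ := fun j => ((star U * ρ * U) j j).re
  have hσ : (star U * ρ * U).PosSemidef := by
    simpa [star_eq_conjTranspose] using hρ.conjTranspose_mul_mul_same U
  have hp : ∀ j, 0 ≤ p j := fun j => (Complex.nonneg_iff.1 hσ.diag_nonneg).1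
  have hp1 : ∑ j, p j = 1 := by
    have htrσ : (star U * ρ * U).trace = 1 := by
      rw [trace_mul_cycle, Unitary.mul_star_self_of_mem hG.eigenvectorUnitary.2, one_mul, htr]
    simpa [trace, p, Complex.re_sum] using congrArg Complex.re htrσ
  rw [hG.exp_smul_eq_conj_diagonal, hG.mul_self_eq_conj_diagonal,
    re_trace_mul_diagonal_mul_star_mul U hρ.1, re_trace_mul_diagonal_mul_star_mul U hρ.1]
  calc 1 - θ ^ 2 / 2 * ∑ j, ((hG.eigenvalues j : ℂ) ^ 2).re * p j
      = ∑ j, p j * (1 - (θ * hG.eigenvalues j) ^ 2 / 2) := by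
        simp only [mul_sub, mul_one, Finset.sum_sub_distrib, hp1, Finset.mul_sum,
          ← Complex.ofReal_pow, Complex.ofReal_re]
        congr 1
        exact Finset.sum_congr rfl fun j _ => by ring
    _ ≤ ∑ j, p j * Real.cos (θ * hG.eigenvalues j) :=
        Finset.sum_le_sum fun j _ =>
          mul_le_mul_of_nonneg_left Real.one_sub_sq_div_two_le_cos (hp j)
    _ = ∑ j, (Complex.exp (θ * Complex.I * hG.eigenvalues j)).re * p j := by
        refine Finset.sum_congr rfl fun j _ => ?_
        rw [mul_right_comm, ← Complex.ofReal_mul, Complex.exp_ofReal_mul_I_re, mul_comm]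

end Matrix

theorem isHermitian_matSqrt {n : ℕ} (A : Matrix (Fin n) (Fin n) ℂ) :
    (matSqrt A).IsHermitian := by
  unfold matSqrt
  split_ifs
  · exact (CFC.sqrt_nonneg A).posSemidef.1
  · exact isHermitian_zero

theorem matSqrt_mul_self {n : ℕ} {A : Matrix (Fin n) (Fin n) ℂ} (hA : A.PosSemidef) :
    matSqrt A * matSqrt A = A := by
  rw [matSqrt, dif_pos hA, CFC.sqrt_mul_sqrt_self A hA.nonneg]

theorem trace_matSqrt_eq_sum_sqrt_eigenvalues {n : ℕ} {P : Matrix (Fin n) (Fin n) ℂ}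
    (hP : P.PosSemidef) : (matSqrt P).trace = ∑ i, (√(hP.1.eigenvalues i) : ℂ) := by
  rw [matSqrt, dif_pos hP, CFC.sqrt_eq_real_sqrt _ hP.nonneg, cfcₙ_eq_cfc (hf0 := Real.sqrt_zero),
    hP.1.cfc_eq, IsHermitian.cfc, Unitary.conjStarAlgAut_apply, trace_mul_cycle,
    Unitary.coe_star_mul_self, one_mul, trace_diagonal]
  rfl

theorem re_trace_le_re_trace_matSqrt_mul_conjTranspose {n : ℕ} (M : Matrix (Fin n) (Fin n) ℂ) :
    M.trace.re ≤ (matSqrt (M * Mᴴ)).trace.re := by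
  have hP := posSemidef_self_mul_conjTranspose M
  set V : Matrix (Fin n) (Fin n) ℂ := (hP.1.eigenvectorUnitary : Matrix (Fin n) (Fin n) ℂ)
  set N := star V * M * V
  have hVV : V * star V = 1 := Unitary.mul_star_self_of_mem hP.1.eigenvectorUnitary.2
  have hNN : N * Nᴴ = diagonal (RCLike.ofReal ∘ hP.1.eigenvalues) := by
    have hconj : N * Nᴴ = star V * (M * Mᴴ) * V := by
      simp only [N, ← star_eq_conjTranspose, star_mul, star_star, mul_assoc]
      rw [← mul_assoc V, hVV, one_mul]
    simpa [hconj] using hP.1.conjStarAlgAut_star_eigenvectorUnitary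
  have hdiag : ∀ i, ‖N i i‖ ≤ √(hP.1.eigenvalues i) := fun i =>
    Real.le_sqrt_of_sq_le (by simpa [hNN] using sq_norm_diag_le_re_mul_conjTranspose_diag N i)
  calc M.trace.re = N.trace.re := by rw [trace_mul_cycle, hVV, one_mul]
    _ = ∑ i, (N i i).re := Complex.re_sum _ _
    _ ≤ ∑ i, √(hP.1.eigenvalues i) :=
        Finset.sum_le_sum fun i _ => (Complex.re_le_norm _).trans (hdiag i)
    _ = (matSqrt (M * Mᴴ)).trace.re := by
        simp [trace_matSqrt_eq_sum_sqrt_eigenvalues hP, Complex.re_sum]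

theorem re_trace_mul_le_fidelity {n : ℕ} {ρ : Matrix (Fin n) (Fin n) ℂ} (hρ : ρ.PosSemidef)
    (U : Matrix (Fin n) (Fin n) ℂ) : (U * ρ).trace.re ≤ fidelity ρ (U * ρ * Uᴴ) := by
  set A := matSqrt ρ
  have hA : Aᴴ = A := (isHermitian_matSqrt ρ).eq
  have hAA : A * A = ρ := matSqrt_mul_self hρ
  have hMM : A * (U * ρ * Uᴴ) * A = (A * U * A) * (A * U * A)ᴴ := by
    rw [conjTranspose_mul, conjTranspose_mul, hA, ← hAA]
    simp only [mul_assoc]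
  rw [fidelity, hMM]
  calc (U * ρ).trace.re = (A * U * A).trace.re := by rw [trace_mul_cycle, hAA, trace_mul_comm]
    _ ≤ _ := re_trace_le_re_trace_matSqrt_mul_conjTranspose _

theorem evol_sub_smul_one {n : ℕ} (ℏ : ℝ) (H A : Matrix (Fin n) (Fin n) ℂ) (t : ℝ) (z : ℂ) :
    evol ℏ (H - z • 1) A t = evol ℏ H A t := by
  simp only [evol, exp_smul_sub_smul_one, smul_mul_assoc, mul_smul_comm, smul_smul,
    ← Complex.exp_add]
  rw [neg_mul, neg_neg, neg_add_cancel, Complex.exp_zero, one_smul]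

theorem evol_eq_mul_mul_conjTranspose {n : ℕ} (ℏ : ℝ) {H : Matrix (Fin n) (Fin n) ℂ}
    (hH : H.IsHermitian) (A : Matrix (Fin n) (Fin n) ℂ) (t : ℝ) :
    evol ℏ H A t = NormedSpace.exp ((((-(t / ℏ) : ℝ) : ℂ) * Complex.I) • H) * A *
      (NormedSpace.exp ((((-(t / ℏ) : ℝ) : ℂ) * Complex.I) • H))ᴴ := by
  rw [← exp_conjTranspose, conjTranspose_smul, hH.eq, evol]
  congr 3
  · congr 1
    push_cast
    ring
  · simp only [star_mul', Complex.star_def, Complex.conj_ofReal, Complex.conj_I]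
    push_cast
    ring

theorem mandelstam_tamm_bures_speed_limit {n : ℕ} (ℏ : ℝ) (hℏ : 0 < ℏ)
    (H ρ0 : Matrix (Fin n) (Fin n) ℂ)
    (hH : H.IsHermitian) (hρ0 : ρ0.PosSemidef) (htr : ρ0.trace = 1)
    (ΔE : ℝ) (hΔE : ΔE = Real.sqrt (((H * H * ρ0).trace).re - (((H * ρ0).trace).re) ^ 2)) :
    ∀ t : ℝ, 0 ≤ t →
      Real.sqrt (2 - 2 * fidelity ρ0 (evol ℏ H ρ0 t)) ≤ t * ΔE / ℏ := by
  intro t ht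
  set E := (H * ρ0).trace.re
  set G := H - (E : ℂ) • 1
  have hG : G.IsHermitian := hH.sub (by simp [IsHermitian, conjTranspose_smul])
  have hvar : (G * G * ρ0).trace.re = (H * H * ρ0).trace.re - E ^ 2 := by
    rw [re_trace_sub_smul_one_mul_self_mul, htr, Complex.one_re]
    ring
  have hfid : 1 - (t / ℏ) ^ 2 / 2 * (G * G * ρ0).trace.re ≤ fidelity ρ0 (evol ℏ H ρ0 t) := by
    rw [← evol_sub_smul_one ℏ H ρ0 t E, evol_eq_mul_mul_conjTranspose ℏ hG]
    refine le_trans ?_ (re_trace_mul_le_fidelity hρ0 _)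
    simpa only [neg_sq] using
      hG.one_sub_sq_div_two_mul_re_trace_le_re_trace_exp_mul hρ0 htr (-(t / ℏ))
  calc √(2 - 2 * fidelity ρ0 (evol ℏ H ρ0 t)) ≤ √((t / ℏ) ^ 2 * (G * G * ρ0).trace.re) :=
        Real.sqrt_le_sqrt (by linarith)
    _ = t * ΔE / ℏ := by
        rw [Real.sqrt_mul (sq_nonneg _), Real.sqrt_sq (div_nonneg ht hℏ.le), hvar, hΔE]
        ring
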